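/- arXiv:1601.06537 — 3 statements merged into one kernel-verified Lean document; each statement's English description precedes it below -/
import Mathlib

section
/- Suppose the support 𝒮 = {a ∈ 𝒜 : p_a > 0} of P is finite. Then for every integer n ≥ 1 and every integer r with 0 ≤ r ≤ n−1, E M_{n,r} ≤ c(r)·|𝒮|/n, and moreover E M_{n,n} ≤ p_⋆^{n+1}·|𝒮|, where p_⋆ = max{p_a : a ∈ 𝒜}. -/
/-- The constant `c(r)`: `c(0) = e⁻¹` and `c(r) = e(1+r)/√π` for `r ≥ 1`. -/
noncomputable def cconst (r : ℕ) : ℝ :=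
  if r = 0 then Real.exp (-1) else Real.exp 1 * (1 + r) / Real.sqrt Real.pi

/-- The expected occupancy probability
`E M_{n,r} = C(n,r) ∑_a p_a^{r+1} (1 - p_a)^{n-r}`. -/
noncomputable def expOcc {A : Type*} (p : A → ℝ) (n r : ℕ) : ℝ :=
  (n.choose r : ℝ) * ∑' a, p a ^ (r + 1) * (1 - p a) ^ (n - r)

/-!
With finite support the series defining `E M_{n,r}` is a finite sum over `𝒮`, so it suffices to
bound each term `C(n,r) p^{r+1} (1-p)^{n-r}` uniformly in `p ∈ [0,1]` and multiply by `|𝒮|`.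
For `r = 0` the term is `p (1-p)^n ≤ p e^{-np} ≤ e⁻¹/n`. For `r ≥ 1` the identity
`(n+1) C(n,r) = (r+1) C(n+1,r+1)` writes it as `(r+1)/(n+1)` times a binomial probability,
so it is at most `(r+1)/n ≤ c(r)/n`, because `√π ≤ 2 ≤ e`. For `r = n` the term is
`p^{n+1} ≤ p⋆^{n+1}`.
-/

open Real

theorem choose_mul_pow_mul_one_sub_pow_le_one {m k : ℕ} (hk : k ≤ m) {p : ℝ}
    (hp0 : 0 ≤ p) (hp1 : p ≤ 1) :
    (m.choose k : ℝ) * (p ^ k * (1 - p) ^ (m - k)) ≤ 1 := by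
  have hterm_nonneg :
      ∀ i ∈ Finset.range (m + 1), 0 ≤ p ^ i * (1 - p) ^ (m - i) * (m.choose i : ℝ) := by
    intro i _
    have : 0 ≤ 1 - p := by linarith
    positivity
  calc (m.choose k : ℝ) * (p ^ k * (1 - p) ^ (m - k))
      = p ^ k * (1 - p) ^ (m - k) * (m.choose k : ℝ) := by ring
    _ ≤ ∑ i ∈ Finset.range (m + 1), p ^ i * (1 - p) ^ (m - i) * (m.choose i : ℝ) :=
        Finset.single_le_sum hterm_nonneg (Finset.mem_range.2 (Nat.lt_succ_of_le hk))
    _ = (p + (1 - p)) ^ m := (add_pow _ _ _).symm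
    _ = 1 := by ring

theorem choose_mul_pow_succ_mul_one_sub_pow_le {n r : ℕ} (hr : r ≤ n) {p : ℝ}
    (hp0 : 0 ≤ p) (hp1 : p ≤ 1) :
    (n.choose r : ℝ) * (p ^ (r + 1) * (1 - p) ^ (n - r)) ≤ (r + 1) / (n + 1) := by
  have hchoose : ((n : ℝ) + 1) * n.choose r = (r + 1) * (n + 1).choose (r + 1) := by
    rw [mul_comm ((r : ℝ) + 1)]
    exact_mod_cast Nat.add_one_mul_choose_eq n r
  have hprob := choose_mul_pow_mul_one_sub_pow_le_one (m := n + 1) (k := r + 1) (by omega) hp0 hp1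
  rw [show n + 1 - (r + 1) = n - r by omega] at hprob
  rw [le_div_iff₀ (by positivity)]
  calc (n.choose r : ℝ) * (p ^ (r + 1) * (1 - p) ^ (n - r)) * (n + 1)
      = (r + 1 : ℝ) * ((n + 1).choose (r + 1) * (p ^ (r + 1) * (1 - p) ^ (n - r))) := by
        linear_combination (p ^ (r + 1) * (1 - p) ^ (n - r)) * hchoose
    _ ≤ (r + 1 : ℝ) * 1 := by gcongr
    _ = r + 1 := mul_one _

theorem natCast_mul_mul_one_sub_pow_le_exp_neg_one (n : ℕ) {p : ℝ} (hp0 : 0 ≤ p) (hp1 : p ≤ 1) :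
    n * (p * (1 - p) ^ n) ≤ exp (-1) :=
  calc n * (p * (1 - p) ^ n) ≤ n * (p * exp (-p) ^ n) := by
        gcongr
        exact one_sub_le_exp_neg p
    _ = n * p * exp (-(n * p)) := by rw [← exp_nat_mul]; ring_nf
    _ ≤ exp (-1) := mul_exp_neg_le_exp_neg_one _

theorem add_one_le_cconst {r : ℕ} (hr : r ≠ 0) : (r : ℝ) + 1 ≤ cconst r := by
  have hsqrt_pi : √π ≤ 2 := by
    rw [sqrt_le_left (by norm_num)]
    linarith [pi_le_four]
  have he : 2 ≤ exp 1 := by linarith [add_one_le_exp 1]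
  rw [cconst, if_neg hr, le_div_iff₀ (sqrt_pos.2 pi_pos)]
  nlinarith

theorem choose_mul_pow_succ_mul_one_sub_pow_le_cconst_div {n r : ℕ} (hn : 1 ≤ n) (hr : r ≤ n)
    {p : ℝ} (hp0 : 0 ≤ p) (hp1 : p ≤ 1) :
    (n.choose r : ℝ) * (p ^ (r + 1) * (1 - p) ^ (n - r)) ≤ cconst r / n := by
  have hn_pos : (0 : ℝ) < n := by exact_mod_cast hn
  rcases Nat.eq_zero_or_pos r with rfl | hr_pos
  · rw [cconst, if_pos rfl, le_div_iff₀ hn_pos]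
    simpa [mul_comm] using natCast_mul_mul_one_sub_pow_le_exp_neg_one n hp0 hp1
  · calc (n.choose r : ℝ) * (p ^ (r + 1) * (1 - p) ^ (n - r)) ≤ (r + 1) / (n + 1) :=
          choose_mul_pow_succ_mul_one_sub_pow_le hr hp0 hp1
      _ ≤ (r + 1) / n := by gcongr; linarith
      _ ≤ cconst r / n := by gcongr; exact add_one_le_cconst hr_pos.ne'

theorem expOcc_le_ncard_mul {A : Type*} {p : A → ℝ} (hp0 : ∀ a, 0 ≤ p a)
    (hS : {a | 0 < p a}.Finite) (n r : ℕ) {B : ℝ}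
    (hB : ∀ a, 0 < p a → (n.choose r : ℝ) * (p a ^ (r + 1) * (1 - p a) ^ (n - r)) ≤ B) :
    expOcc p n r ≤ {a | 0 < p a}.ncard * B := by
  have hvanish : ∀ a ∉ hS.toFinset, p a ^ (r + 1) * (1 - p a) ^ (n - r) = 0 := by
    intro a ha
    have : p a = 0 := le_antisymm (not_lt.1 (by simpa using ha)) (hp0 a)
    simp [this]
  rw [expOcc, tsum_eq_sum hvanish, Finset.mul_sum, Set.ncard_eq_toFinset_card _ hS,
    ← nsmul_eq_mul]
  exact Finset.sum_le_card_nsmul _ _ _ fun a ha => hB a (by simpa using ha)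

theorem expected_occupancy_finite_support_general
    {A : Type*}
    (p : A → ℝ) (hp0 : ∀ a, 0 ≤ p a) (hp1 : ∑' a, p a = 1)
    (hS : ({a | 0 < p a} : Set A).Finite)
    (pstar : ℝ) (hpstar : IsGreatest (Set.range p) pstar)
    (n : ℕ) (hn : 1 ≤ n) :
    (∀ r : ℕ, r ≤ n - 1 →
        expOcc p n r ≤ cconst r * (({a | 0 < p a} : Set A).ncard : ℝ) / n)
      ∧ expOcc p n n ≤ pstar ^ (n + 1) * (({a | 0 < p a} : Set A).ncard : ℝ) := by
  have hsummable : Summable p := by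
    by_contra h
    simp [tsum_eq_zero_of_not_summable h] at hp1
  have hp_le_one : ∀ a, p a ≤ 1 := fun a => hp1 ▸ hsummable.le_tsum a fun b _ => hp0 b
  constructor
  · intro r hr
    calc expOcc p n r ≤ {a | 0 < p a}.ncard * (cconst r / n) :=
          expOcc_le_ncard_mul hp0 hS n r fun a _ =>
            choose_mul_pow_succ_mul_one_sub_pow_le_cconst_div hn (by omega) (hp0 a) (hp_le_one a)
      _ = cconst r * {a | 0 < p a}.ncard / n := by ring
  · calc expOcc p n n ≤ {a | 0 < p a}.ncard * pstar ^ (n + 1) :=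
          expOcc_le_ncard_mul hp0 hS n n fun a _ => by
            simpa using pow_le_pow_left₀ (hp0 a) (hpstar.2 ⟨a, rfl⟩) (n + 1)
      _ = pstar ^ (n + 1) * {a | 0 < p a}.ncard := mul_comm _ _

/-- Finite support case: `E M_{n,r} ≤ c(r)|𝒮|/n` for `0 ≤ r ≤ n-1`,
and `E M_{n,n} ≤ p⋆^{n+1}|𝒮|`. -/
theorem expected_occupancy_finite_support
    {A : Type*} [Countable A]
    (p : A → ℝ) (hp0 : ∀ a, 0 ≤ p a) (hp1 : ∑' a, p a = 1)
    (hS : ({a | 0 < p a} : Set A).Finite)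
    (pstar : ℝ) (hpstar : IsGreatest (Set.range p) pstar)
    (n : ℕ) (hn : 1 ≤ n) :
    (∀ r : ℕ, r ≤ n - 1 →
        expOcc p n r ≤ cconst r * (({a | 0 < p a} : Set A).ncard : ℝ) / n)
      ∧ expOcc p n n ≤ pstar ^ (n + 1) * (({a | 0 < p a} : Set A).ncard : ℝ) :=
  expected_occupancy_finite_support_general p hp0 hp1 hS pstar hpstar n hn
end

section
/- Suppose the counting function ν is regularly varying at 0 in the sense that ν(ε) = ε^{−α}·ℓ(1/ε) for all 0 < ε ≤ 1, for some α ∈ [0,1] and some function ℓ slowly varying at ∞. Then κ₊⁰ := lim_{ε→0} κ₊(ε) exists and equals 2^α, where κ₊(ε) = sup_{0<u≤ε} ν(u/2)/ν(u). -/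
/-!
For `0 < u ≤ 1` the regular variation of `ν` gives
`ν(u/2)/ν(u) = 2^α · ℓ(2/u)/ℓ(1/u)`, which tends to `2^α` as `u → 0⁺` because `ℓ` is slowly
varying. A supremum over `(0, ε]` of a function converging at `0⁺` converges to the same limit,
since for small `ε` every value on `(0, ε]` is close to it and the value at `ε` itself is attained.
-/

/-- `ℓ` is slowly varying at `+∞`: `ℓ(cx)/ℓ(x) → 1` as `x → ∞` for every `c > 0`. -/
def SlowlyVarying (ℓ : ℝ → ℝ) : Prop :=
  ∀ c : ℝ, 0 < c →
    Filter.Tendsto (fun x => ℓ (c * x) / ℓ x) Filter.atTop (nhds 1)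

/-- `κ₊(ε) = sup_{0 < u ≤ ε} ν(u/2)/ν(u)`. -/
noncomputable def kplus (ν : ℝ → ℝ) (ε : ℝ) : ℝ :=
  sSup ((fun u => ν (u / 2) / ν u) '' Set.Ioc (0 : ℝ) ε)

open Filter Set Topology

section SupOverIoc

variable {α β : Type*} [LinearOrder α] [TopologicalSpace α] [OrderTopology α]
  [DenselyOrdered α] [NoMaxOrder α]

theorem eventually_forall_Ioc_of_eventually_nhdsGT {a : α} {P : α → Prop}
    (h : ∀ᶠ u in 𝓝[>] a, P u) : ∀ᶠ ε in 𝓝[>] a, ∀ u ∈ Ioc a ε, P u := by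
  obtain ⟨x, hax, hx⟩ := (nhdsGT_basis_Ioc a).eventually_iff.1 h
  filter_upwards [Ioc_mem_nhdsGT hax] with ε hε u hu
  exact hx ⟨hu.1, hu.2.trans hε.2⟩

variable [ConditionallyCompleteLinearOrder β] [TopologicalSpace β] [OrderTopology β]
  [DenselyOrdered β] [NoMaxOrder β]

theorem tendsto_sSup_image_Ioc_nhdsGT {f : α → β} {a : α} {L : β}
    (hf : Tendsto f (𝓝[>] a) (𝓝 L)) :
    Tendsto (fun ε => sSup (f '' Ioc a ε)) (𝓝[>] a) (𝓝 L) := by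
  have hbound : ∀ c, L < c → ∀ᶠ ε in 𝓝[>] a, ∀ u ∈ Ioc a ε, f u < c := fun c hc =>
    eventually_forall_Ioc_of_eventually_nhdsGT (hf.eventually_lt_const hc)
  have hself : ∀ᶠ ε in 𝓝[>] a, ε ∈ Ioc a ε := by
    filter_upwards [self_mem_nhdsWithin] with ε hε using ⟨hε, le_rfl⟩
  refine tendsto_order.2 ⟨fun b hb => ?_, fun c hc => ?_⟩
  · obtain ⟨c, hc⟩ := exists_gt L
    filter_upwards [hf.eventually_const_lt hb, hbound c hc, hself] with ε hbε hcε hε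
    have hbdd : BddAbove (f '' Ioc a ε) := ⟨c, forall_mem_image.2 fun u hu => (hcε u hu).le⟩
    exact hbε.trans_le (le_csSup hbdd (mem_image_of_mem f hε))
  · obtain ⟨c', hLc', hc'c⟩ := exists_between hc
    filter_upwards [hbound c' hLc', hself] with ε hc'ε hε
    refine (csSup_le (nonempty_of_mem (mem_image_of_mem f hε)) ?_).trans_lt hc'c
    exact forall_mem_image.2 fun u hu => (hc'ε u hu).le

end SupOverIoc

theorem half_ratio_eq_of_regularlyVarying {ν ℓ : ℝ → ℝ} {α : ℝ}
    (hreg : ∀ ε : ℝ, 0 < ε → ε ≤ 1 → ν ε = ε ^ (-α) * ℓ (1 / ε))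
    {u : ℝ} (hu : 0 < u) (hu1 : u ≤ 1) :
    ν (u / 2) / ν u = 2 ^ α * (ℓ (2 * u⁻¹) / ℓ u⁻¹) := by
  have hpow : (u / 2) ^ (-α) / u ^ (-α) = 2 ^ α := by
    rw [Real.div_rpow hu.le zero_le_two, Real.rpow_neg zero_le_two, div_inv_eq_mul,
      mul_div_right_comm, div_self (Real.rpow_pos_of_pos hu _).ne', one_mul]
  rw [hreg u hu hu1, hreg (u / 2) (by positivity) (by linarith), mul_div_mul_comm, hpow,
    one_div_div, one_div, div_eq_mul_inv 2 u]

theorem tendsto_half_ratio_of_regularlyVarying {ν ℓ : ℝ → ℝ} {α : ℝ} (hsv : SlowlyVarying ℓ)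
    (hreg : ∀ ε : ℝ, 0 < ε → ε ≤ 1 → ν ε = ε ^ (-α) * ℓ (1 / ε)) :
    Tendsto (fun u => ν (u / 2) / ν u) (𝓝[>] 0) (𝓝 (2 ^ α)) := by
  have hlim := ((hsv 2 two_pos).comp tendsto_inv_nhdsGT_zero).const_mul ((2 : ℝ) ^ α)
  rw [mul_one] at hlim
  refine hlim.congr' ?_
  filter_upwards [Ioc_mem_nhdsGT one_pos] with u hu
  exact (half_ratio_eq_of_regularlyVarying hreg hu.1 hu.2).symm

theorem kplus_limit_regularly_varying_general
    (ν : ℝ → ℝ)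
    (α : ℝ)
    (ℓ : ℝ → ℝ) (hsv : SlowlyVarying ℓ)
    (hreg : ∀ ε : ℝ, 0 < ε → ε ≤ 1 → ν ε = ε ^ (-α) * ℓ (1 / ε)) :
    Filter.Tendsto (kplus ν) (nhdsWithin 0 (Set.Ioi (0 : ℝ)))
      (nhds ((2 : ℝ) ^ α)) :=
  tendsto_sSup_image_Ioc_nhdsGT (tendsto_half_ratio_of_regularlyVarying hsv hreg)

/-- If the counting function is regularly varying at 0, `ν(ε) = ε^{-α} ℓ(1/ε)` on
`(0,1]` with `ℓ` slowly varying, then `κ₊(ε) → 2^α` as `ε → 0`. -/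
theorem kplus_limit_regularly_varying
    {A : Type*} [Countable A]
    (p : A → ℝ) (hp0 : ∀ a, 0 ≤ p a) (hp1 : ∑' a, p a = 1)
    (ν : ℝ → ℝ) (hν : ∀ ε : ℝ, ν ε = (({a | ε ≤ p a} : Set A).ncard : ℝ))
    (α : ℝ) (hα : α ∈ Set.Icc (0 : ℝ) 1)
    (ℓ : ℝ → ℝ) (hℓpos : ∀ x : ℝ, 0 < x → 0 < ℓ x) (hsv : SlowlyVarying ℓ)
    (hreg : ∀ ε : ℝ, 0 < ε → ε ≤ 1 → ν ε = ε ^ (-α) * ℓ (1 / ε)) :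
    Filter.Tendsto (kplus ν) (nhdsWithin 0 (Set.Ioi (0 : ℝ)))
      (nhds ((2 : ℝ) ^ α)) :=
  kplus_limit_regularly_varying_general ν α ℓ hsv hreg
end

section
/- Let (E,d) be a metric space, P a Borel probability measure on E, δ > 0 and n ≥ 1. Then for every x ∈ E, every t > 0, every ρ with 0 < ρ ≤ δ/2, and every finite family of open balls B_1,…,B_N of radius ρ covering the open ball B_{x,t} = {u : d(x,u) < t}, the expected generalized missing mass satisfies E M^{(δ)}_{n,0} = ∫_E (1 − P(B_{u,δ}))^n P(du) ≤ (1 − P(B_{x,t})) + N/(n·e). In particular, writing τ_x(t) = 1 − P(B_{x,t}) and N_x(t,ρ) for the ρ-covering number of B_{x,t}, one has E M^{(δ)}_{n,0} ≤ inf_{x∈E, t>0, 0<ρ≤δ/2} { τ_x(t) + N_x(t,ρ)/(n·e) }. -/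
/-!
Split `E` into `B_{x,t}` and its complement. On the complement the integrand is at most `1`,
which gives the term `1 - P(B_{x,t})`. A point `u` of a covering ball `B_i = B(c_i, ρ)` satisfies
`B_i ⊆ B_{u,δ}` because `2ρ ≤ δ`, so the integral over `B_i` is at most
`P(B_i) (1 - P(B_i))^n ≤ 1/(n e)`; summing over the cover gives `N/(n e)`.
-/

open MeasureTheory Metric Set Real

theorem mul_one_sub_pow_le_inv_mul_exp_one {p : ℝ} (hp0 : 0 ≤ p) (hp1 : p ≤ 1) {n : ℕ}
    (hn : 0 < n) : p * (1 - p) ^ n ≤ (n * exp 1)⁻¹ := by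
  have hn' : (0 : ℝ) < n := by exact_mod_cast hn
  have hpow : (1 - p) ^ n ≤ exp (-(n * p)) := by
    calc (1 - p) ^ n ≤ exp (-p) ^ n := pow_le_pow_left₀ (sub_nonneg.2 hp1) (one_sub_le_exp_neg p) n
      _ = exp (-(n * p)) := by rw [← exp_nat_mul]; ring_nf
  calc p * (1 - p) ^ n ≤ p * exp (-(n * p)) := by gcongr
    _ = (n * p) * exp (-(n * p)) / n := by field_simp
    _ ≤ exp (-1) / n := by gcongr; exact mul_exp_neg_le_exp_neg_one _
    _ = (n * exp 1)⁻¹ := by rw [exp_neg]; field_simp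

section Integral

variable {α : Type*} [MeasurableSpace α] {μ : Measure α} {f : α → ℝ}

theorem setIntegral_le_sum_setIntegral_of_subset_iUnion {ι : Type*} [Fintype ι] {s : Set α}
    {t : ι → Set α} (hst : s ⊆ ⋃ i, t i) (hf : 0 ≤ f) (hfi : Integrable f μ) :
    ∫ x in s, f x ∂μ ≤ ∑ i, ∫ x in t i, f x ∂μ := by
  have hle : μ.restrict s ≤ ∑ i, μ.restrict (t i) := by
    rw [← Measure.sum_fintype]
    exact (Measure.restrict_mono_set μ hst).trans Measure.restrict_iUnion_le
  rw [← integral_finsetSum_measure fun i _ => hfi.restrict]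
  exact integral_mono_measure hle (ae_of_all _ hf)
    (integrable_finsetSum_measure.2 fun i _ => hfi.restrict)

theorem integral_le_setIntegral_add_measureReal_compl [IsFiniteMeasure μ] {s : Set α}
    (hs : MeasurableSet s) (hfi : Integrable f μ) (hf : ∀ x, f x ≤ 1) :
    ∫ x, f x ∂μ ≤ ∫ x in s, f x ∂μ + μ.real sᶜ := by
  rw [← integral_add_compl hs hfi]
  gcongr
  calc ∫ x in sᶜ, f x ∂μ ≤ ∫ _ in sᶜ, (1 : ℝ) ∂μ :=
        integral_mono hfi.restrict (integrable_const 1) hf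
    _ = μ.real sᶜ := by simp

end Integral

section MetricSpace

variable {E : Type*} [PseudoMetricSpace E] [MeasurableSpace E]

theorem lowerSemicontinuous_measure_ball (μ : Measure E) (δ : ℝ) :
    LowerSemicontinuous fun u => μ (ball u δ) := by
  intro u C hC
  obtain ⟨r, hr_mono, hr_mem, hr_lim⟩ := exists_seq_strictMono_tendsto' (sub_one_lt δ)
  have hunion : ⋃ k, ball u (r k) = ball u δ := by
    refine Subset.antisymm (iUnion_subset fun k => ball_subset_ball (hr_mem k).2.le) fun v hv => ?_
    obtain ⟨k, hk⟩ := (hr_lim.eventually (lt_mem_nhds (mem_ball.1 hv))).exists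
    exact mem_iUnion.2 ⟨k, hk⟩
  have hlim := tendsto_measure_iUnion_atTop (μ := μ) (s := fun k => ball u (r k))
    fun i j hij => ball_subset_ball (hr_mono.monotone hij)
  rw [hunion] at hlim
  obtain ⟨k, hk⟩ := (hlim.eventually (lt_mem_nhds hC)).exists
  filter_upwards [ball_mem_nhds u (sub_pos.2 (hr_mem k).2)] with v hv
  refine hk.trans_le (measure_mono (ball_subset_ball' ?_))
  rw [dist_comm]
  linarith [mem_ball.1 hv]

variable (P : Measure E) [IsProbabilityMeasure P] (δ : ℝ) (n : ℕ)

theorem integrable_one_sub_measureReal_ball_pow [OpensMeasurableSpace E] :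
    Integrable (fun u => (1 - P.real (ball u δ)) ^ n) P := by
  have hmeas : Measurable fun u => P.real (ball u δ) :=
    (lowerSemicontinuous_measure_ball P δ).measurable.ennreal_toReal
  refine Integrable.of_bound ((measurable_const.sub hmeas).pow_const n).aestronglyMeasurable 1
    (ae_of_all _ fun u => ?_)
  rw [Real.norm_eq_abs, abs_of_nonneg (by simp)]
  exact pow_le_one₀ (by simp) (by simp)

theorem setIntegral_ball_one_sub_measureReal_ball_pow_le [OpensMeasurableSpace E] {ρ : ℝ}
    (hρδ : ρ ≤ δ / 2) (hn : 0 < n) (c : E) :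
    ∫ u in ball c ρ, (1 - P.real (ball u δ)) ^ n ∂P ≤ (n * exp 1)⁻¹ := by
  have hsub : ∀ u ∈ ball c ρ, ball c ρ ⊆ ball u δ := fun u hu =>
    ball_subset_ball' (by linarith [mem_ball.1 hu, dist_comm u c])
  have hle : ∀ u ∈ ball c ρ, (1 - P.real (ball u δ)) ^ n ≤ (1 - P.real (ball c ρ)) ^ n :=
    fun u hu => pow_le_pow_left₀ (by simp) (by gcongr; exacts [by simp, hsub u hu]) n
  calc ∫ u in ball c ρ, (1 - P.real (ball u δ)) ^ n ∂P
      ≤ ∫ _ in ball c ρ, (1 - P.real (ball c ρ)) ^ n ∂P :=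
        setIntegral_mono_on (integrable_one_sub_measureReal_ball_pow P δ n).integrableOn
          (integrable_const _) measurableSet_ball hle
    _ = P.real (ball c ρ) * (1 - P.real (ball c ρ)) ^ n := by simp
    _ ≤ (n * exp 1)⁻¹ := mul_one_sub_pow_le_inv_mul_exp_one measureReal_nonneg (by simp) hn

end MetricSpace

theorem generalized_missing_mass_upper_bound_general
    {E : Type*} [MetricSpace E] [MeasurableSpace E] [BorelSpace E]
    (P : Measure E) [IsProbabilityMeasure P]
    (δ : ℝ) (n : ℕ) (hn : 1 ≤ n)
    (x : E) (t : ℝ)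
    (ρ : ℝ) (hρδ : ρ ≤ δ / 2)
    (N : ℕ) (c : Fin N → E)
    (hcover : Metric.ball x t ⊆ ⋃ i, Metric.ball (c i) ρ) :
    ∫ u, (1 - (P (Metric.ball u δ)).toReal) ^ n ∂P
      ≤ (1 - (P (Metric.ball x t)).toReal) + N / (n * Real.exp 1) := by
  have hint := integrable_one_sub_measureReal_ball_pow P δ n
  calc ∫ u, (1 - P.real (ball u δ)) ^ n ∂P
      ≤ ∫ u in ball x t, (1 - P.real (ball u δ)) ^ n ∂P + P.real (ball x t)ᶜ :=
        integral_le_setIntegral_add_measureReal_compl measurableSet_ball hint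
          fun u => pow_le_one₀ (by simp) (by simp)
    _ ≤ ∑ i, ∫ u in ball (c i) ρ, (1 - P.real (ball u δ)) ^ n ∂P + (1 - P.real (ball x t)) := by
        rw [probReal_compl_eq_one_sub measurableSet_ball]
        gcongr
        exact setIntegral_le_sum_setIntegral_of_subset_iUnion hcover (fun u => by simp) hint
    _ ≤ ∑ _i : Fin N, (n * exp 1)⁻¹ + (1 - P.real (ball x t)) := by
        gcongr with i
        exact setIntegral_ball_one_sub_measureReal_ball_pow_le P δ n hρδ hn (c i)
    _ = (1 - P.real (ball x t)) + N / (n * exp 1) := by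
        simp only [Finset.sum_const, Finset.card_univ, Fintype.card_fin, nsmul_eq_mul]
        ring

/-- Generalized occupancy problem in a metric space: for every `x ∈ E`, `t > 0`,
`0 < ρ ≤ δ/2` and every finite family of `ρ`-balls covering `B_{x,t}`, the expected
generalized missing mass `E M^{(δ)}_{n,0} = ∫_E (1 - P(B_{u,δ}))^n P(du)` satisfies
`E M^{(δ)}_{n,0} ≤ (1 - P(B_{x,t})) + N/(n e)`. -/
theorem generalized_missing_mass_upper_bound
    {E : Type*} [MetricSpace E] [MeasurableSpace E] [BorelSpace E]
    (P : Measure E) [IsProbabilityMeasure P]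
    (δ : ℝ) (hδ : 0 < δ) (n : ℕ) (hn : 1 ≤ n)
    (x : E) (t : ℝ) (ht : 0 < t)
    (ρ : ℝ) (hρ : 0 < ρ) (hρδ : ρ ≤ δ / 2)
    (N : ℕ) (c : Fin N → E)
    (hcover : Metric.ball x t ⊆ ⋃ i, Metric.ball (c i) ρ) :
    ∫ u, (1 - (P (Metric.ball u δ)).toReal) ^ n ∂P
      ≤ (1 - (P (Metric.ball x t)).toReal) + N / (n * Real.exp 1) :=
  generalized_missing_mass_upper_bound_general P δ n hn x t ρ hρδ N c hcover
end
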